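/- There is no binary self-orthogonal [94,7,46] code; that is, no 7-dimensional self-orthogonal subspace of F_2^94 has minimum distance 46. -/

import Mathlib

open Finset

/-- Hamming weight of a binary vector. -/
def wt {ι : Type*} [Fintype ι] (x : ι → ZMod 2) : ℕ :=
  (Finset.univ.filter fun i => x i ≠ 0).card

/-- A binary linear code is self-orthogonal if any two codewords are orthogonal. -/
def SelfOrthogonal {ι : Type*} [Fintype ι] (C : Submodule (ZMod 2) (ι → ZMod 2)) : Prop :=
  ∀ x ∈ C, ∀ y ∈ C, ∑ i, x i * y i = 0

/-- `C` has minimum distance exactly `d`: some nonzero codeword has weight `d`,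
and every nonzero codeword has weight at least `d`. -/
def HasMinDist {ι : Type*} [Fintype ι] (C : Submodule (ZMod 2) (ι → ZMod 2)) (d : ℕ) : Prop :=
  (∃ x ∈ C, x ≠ 0 ∧ wt x = d) ∧ ∀ x ∈ C, x ≠ 0 → d ≤ wt x

/-- The Griesmer function `g(k,d) = ∑_{i=0}^{k-1} ⌈d/2^i⌉` (ceiling division). -/
def griesmerBound (k d : ℕ) : ℕ :=
  ∑ i ∈ Finset.range k, (d + 2 ^ i - 1) / 2 ^ i

/-!
In a self-orthogonal binary code every weight is even and `wt (x + y) ≡ wt x + wt y (mod 4)`,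
since the overlap of two orthogonal words has even size. Hence `x ↦ wt x / 2 mod 2` is linear,
and its kernel, the doubly-even subcode, has dimension at least `6`. Its nonzero weights are
multiples of `4` that are at least `46`, so at least `48`. Since every coordinate
vanishes on at least half of a binary linear code, double counting gives the Plotkin bound
`2 d (|K| - 1) ≤ n |K|`, which for `n = 94`, `d = 48` forces `|K| ≤ 48 < 64`.
-/

variable {ι : Type*}

section Weight

variable [Fintype ι]

theorem wt_add_add_two_mul_card_overlap (x y : ι → ZMod 2) :
    wt (x + y) + 2 * #{i | x i ≠ 0 ∧ y i ≠ 0} = wt x + wt y := by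
  have pointwise : ∀ a b : ZMod 2,
      ((if a + b ≠ 0 then 1 else 0) + 2 * (if a ≠ 0 ∧ b ≠ 0 then 1 else 0) : ℕ)
        = (if a ≠ 0 then 1 else 0) + (if b ≠ 0 then 1 else 0) := by decide
  simp only [wt, card_filter, mul_sum, ← sum_add_distrib]
  exact sum_congr rfl fun i _ => pointwise (x i) (y i)

theorem natCast_card_overlap (x y : ι → ZMod 2) :
    (#{i | x i ≠ 0 ∧ y i ≠ 0} : ZMod 2) = ∑ i, x i * y i := by
  have pointwise : ∀ a b : ZMod 2, ((if a ≠ 0 ∧ b ≠ 0 then 1 else 0 : ℕ) : ZMod 2) = a * b := by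
    decide
  rw [card_filter, Nat.cast_sum]
  exact sum_congr rfl fun i _ => pointwise (x i) (y i)

namespace SelfOrthogonal

variable {C : Submodule (ZMod 2) (ι → ZMod 2)}

theorem two_dvd_card_overlap (hC : SelfOrthogonal C) {x y : ι → ZMod 2} (hx : x ∈ C)
    (hy : y ∈ C) :
    2 ∣ #{i | x i ≠ 0 ∧ y i ≠ 0} :=
  (ZMod.natCast_eq_zero_iff _ 2).mp ((natCast_card_overlap x y).trans (hC x hx y hy))

theorem two_dvd_wt (hC : SelfOrthogonal C) {x : ι → ZMod 2} (hx : x ∈ C) : 2 ∣ wt x := by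
  simpa only [and_self, wt] using hC.two_dvd_card_overlap hx hx

def halfWeightParity (hC : SelfOrthogonal C) : C →ₗ[ZMod 2] ZMod 2 :=
  AddMonoidHom.toZModLinearMap 2
    { toFun := fun x => ((wt (x : ι → ZMod 2) / 2 : ℕ) : ZMod 2)
      map_zero' := by simp [wt]
      map_add' := fun x y => by
        have hsum := wt_add_add_two_mul_card_overlap (x : ι → ZMod 2) y
        have hxy := hC.two_dvd_wt (C.add_mem x.2 y.2)
        have hx := hC.two_dvd_wt x.2
        have hy := hC.two_dvd_wt y.2
        have hover := hC.two_dvd_card_overlap x.2 y.2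
        rw [Submodule.coe_add, ← Nat.cast_add, ZMod.natCast_eq_natCast_iff']
        omega }

theorem halfWeightParity_apply (hC : SelfOrthogonal C) (x : C) :
    hC.halfWeightParity x = ((wt (x : ι → ZMod 2) / 2 : ℕ) : ZMod 2) :=
  rfl

-- The codewords of weight divisible by `4`, presented as a kernel to make its codimension visible.
def doublyEvenSubcode (hC : SelfOrthogonal C) : Submodule (ZMod 2) (ι → ZMod 2) :=
  (LinearMap.ker hC.halfWeightParity).map C.subtype

theorem doublyEvenSubcode_le (hC : SelfOrthogonal C) : hC.doublyEvenSubcode ≤ C :=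
  Submodule.map_subtype_le _ _

theorem four_dvd_wt_of_mem_doublyEvenSubcode (hC : SelfOrthogonal C) {x : ι → ZMod 2}
    (hx : x ∈ hC.doublyEvenSubcode) : 4 ∣ wt x := by
  obtain ⟨y, hy, rfl⟩ := hx
  rw [SetLike.mem_coe, LinearMap.mem_ker, halfWeightParity_apply, ZMod.natCast_eq_zero_iff] at hy
  have := hC.two_dvd_wt y.2
  simp only [Submodule.coe_subtype]
  omega

theorem finrank_le_finrank_doublyEvenSubcode_add_one (hC : SelfOrthogonal C) :
    Module.finrank (ZMod 2) C ≤ Module.finrank (ZMod 2) hC.doublyEvenSubcode + 1 := by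
  rw [doublyEvenSubcode, Submodule.finrank_map_subtype_eq,
    ← LinearMap.finrank_range_add_finrank_ker hC.halfWeightParity]
  have := Submodule.finrank_le (LinearMap.range hC.halfWeightParity)
  rw [Module.finrank_self] at this
  omega

end SelfOrthogonal

end Weight

section Plotkin

variable (K : Submodule (ZMod 2) (ι → ZMod 2)) [Fintype K]

theorem two_mul_card_coord_ne_zero_le (i : ι) :
    2 * #{v : K | (v : ι → ZMod 2) i ≠ 0} ≤ Fintype.card K := by
  rcases eq_empty_or_nonempty {v : K | (v : ι → ZMod 2) i ≠ 0} with h | ⟨a, ha⟩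
  · simp [h]
  have ha : (a : ι → ZMod 2) i ≠ 0 := (mem_filter.mp ha).2
  have add_eq_zero : ∀ s t : ZMod 2, s ≠ 0 → t ≠ 0 → s + t = 0 := by decide
  -- translation by `a` flips the `i`-th coordinate
  have hle : #{v : K | (v : ι → ZMod 2) i ≠ 0} ≤ #{v : K | ¬(v : ι → ZMod 2) i ≠ 0} :=
    card_le_card_of_injOn (· + a)
      (fun v hv => by
        simp only [coe_filter, Set.mem_ofPred_eq, mem_univ, true_and, Submodule.coe_add,
          Pi.add_apply, not_not] at hv ⊢
        exact add_eq_zero _ _ hv ha)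
      (add_left_injective a).injOn
  have := card_filter_add_card_filter_not (s := univ) (fun v : K => (v : ι → ZMod 2) i ≠ 0)
  rw [card_univ] at this
  omega

theorem plotkin_bound [Fintype ι] {d : ℕ} (hd : ∀ x ∈ K, x ≠ 0 → d ≤ wt x) :
    2 * d * (Fintype.card K - 1) ≤ Fintype.card ι * Fintype.card K := by
  have hupper : 2 * ∑ v : K, wt (v : ι → ZMod 2) ≤ Fintype.card ι * Fintype.card K := by
    have hswap : ∑ v : K, wt (v : ι → ZMod 2) = ∑ i, #{v : K | (v : ι → ZMod 2) i ≠ 0} := by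
      simp only [wt, card_filter]
      exact sum_comm
    calc 2 * ∑ v : K, wt (v : ι → ZMod 2)
        = ∑ i, 2 * #{v : K | (v : ι → ZMod 2) i ≠ 0} := by rw [hswap, mul_sum]
      _ ≤ ∑ _i : ι, Fintype.card K := sum_le_sum fun i _ => two_mul_card_coord_ne_zero_le K i
      _ = Fintype.card ι * Fintype.card K := by rw [sum_const, card_univ, smul_eq_mul]
  have hlower : d * (Fintype.card K - 1) ≤ ∑ v : K, wt (v : ι → ZMod 2) :=
    calc d * (Fintype.card K - 1)
        = ∑ _v ∈ univ.erase (0 : K), d := by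
          rw [sum_const, card_erase_of_mem (mem_univ _), card_univ, smul_eq_mul, mul_comm]
      _ ≤ ∑ v ∈ univ.erase (0 : K), wt (v : ι → ZMod 2) :=
          sum_le_sum fun v hv => hd v v.2 (by simpa using (mem_erase.mp hv).1)
      _ ≤ ∑ v : K, wt (v : ι → ZMod 2) := sum_le_sum_of_subset (erase_subset _ _)
  rw [mul_assoc]
  omega

end Plotkin

theorem stmt18 :
    ¬ ∃ C : Submodule (ZMod 2) (Fin 94 → ZMod 2),
      Module.finrank (ZMod 2) C = 7 ∧ SelfOrthogonal C ∧ HasMinDist C 46 := by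
  classical
  rintro ⟨C, hk, hC, -, hd⟩
  have hcard : 64 ≤ Fintype.card hC.doublyEvenSubcode := by
    have := hC.finrank_le_finrank_doublyEvenSubcode_add_one
    rw [Module.card_eq_pow_finrank (K := ZMod 2), ZMod.card]
    calc 64 = 2 ^ 6 := rfl
      _ ≤ 2 ^ Module.finrank (ZMod 2) hC.doublyEvenSubcode :=
          Nat.pow_le_pow_right two_pos (by omega)
  have hd48 : ∀ x ∈ hC.doublyEvenSubcode, x ≠ 0 → 48 ≤ wt x := fun x hx hx0 => by
    have := hC.four_dvd_wt_of_mem_doublyEvenSubcode hx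
    have := hd x (hC.doublyEvenSubcode_le hx) hx0
    omega
  have := plotkin_bound _ hd48
  simp only [Fintype.card_fin] at this
  omega
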